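/- arXiv:2108.10969 — 11 statements merged into one kernel-verified Lean document; each statement's English description precedes it below -/
import Mathlib

section
/- Let (z_n) be defined by z_0 = 1/4 and z_{n+1} = z_n (1 - z_n). Then n·z_n → 1 as n → ∞. -/
open Filter

/-- If z₀ = 1/4 and z_{n+1} = z_n(1 - z_n), then n·z_n → 1. -/
theorem stmt1 (z : ℕ → ℝ) (h0 : z 0 = 1/4)
    (hrec : ∀ n, z (n+1) = z n * (1 - z n)) :
    Tendsto (fun n : ℕ => (n : ℝ) * z n) atTop (nhds 1) := by
  -- bounds: 0 < z n ≤ 1/4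
  have hb : ∀ n, 0 < z n ∧ z n ≤ 1/4 := by
    intro n
    induction n with
    | zero => rw [h0]; norm_num
    | succ k ih =>
      obtain ⟨h1, h2⟩ := ih
      rw [hrec k]
      constructor
      · have : 0 < 1 - z k := by linarith
        positivity
      · nlinarith
  -- key identity
  have hinv : ∀ n, 1 / z (n+1) = 1 / z n + 1 / (1 - z n) := by
    intro n
    have h1 := (hb n).1
    have h2 := (hb n).2
    have h3 : (1:ℝ) - z n > 0 := by linarith
    rw [hrec n]
    field_simp
    ring
  -- 1/z n ≥ n + 4
  have hlow : ∀ n : ℕ, (n : ℝ) + 4 ≤ 1 / z n := by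
    intro n
    induction n with
    | zero => rw [h0]; norm_num
    | succ k ih =>
      have h1 := (hb k).1
      have h2 := (hb k).2
      have h3 : (1:ℝ) - z k > 0 := by linarith
      have h4 : (1:ℝ) ≤ 1 / (1 - z k) := by
        rw [le_div_iff₀ h3]; linarith
      rw [hinv k]
      push_cast
      linarith
  -- z n → 0
  have hz0 : Tendsto z atTop (nhds 0) := by
    have hub : ∀ n, z n ≤ 1 / ((n : ℝ) + 4) := by
      intro n
      have h1 := (hb n).1
      have h2 := hlow n
      rw [le_div_iff₀ (by positivity : (0:ℝ) < (n:ℝ)+4)]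
      rw [le_div_iff₀ h1] at h2
      nlinarith
    have htop : Tendsto (fun n : ℕ => 1 / ((n : ℝ) + 4)) atTop (nhds 0) := by
      apply Tendsto.div_atTop tendsto_const_nhds
      exact tendsto_atTop_add_const_right atTop 4 tendsto_natCast_atTop_atTop
    refine tendsto_of_tendsto_of_tendsto_of_le_of_le tendsto_const_nhds htop
      (fun n => (hb n).1.le) hub
  -- u n = 1/(1 - z n) → 1
  have hu : Tendsto (fun n => 1 / (1 - z n)) atTop (nhds 1) := by
    have : Tendsto (fun n => 1 - z n) atTop (nhds 1) := by
      simpa using tendsto_const_nhds.sub hz0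
    have := this.inv₀ one_ne_zero
    simpa [one_div] using this
  -- Cesàro
  have hces := hu.cesaro
  have hsum : ∀ n, ∑ i ∈ Finset.range n, 1 / (1 - z i) = 1 / z n - 4 := by
    intro n
    calc ∑ i ∈ Finset.range n, 1 / (1 - z i)
        = ∑ i ∈ Finset.range n, (1 / z (i+1) - 1 / z i) := by
          apply Finset.sum_congr rfl
          intro i _
          rw [hinv i]; ring
      _ = 1 / z n - 1 / z 0 := Finset.sum_range_sub (fun i => 1 / z i) n
      _ = 1 / z n - 4 := by rw [h0]; norm_num
  have hces' : Tendsto (fun n : ℕ => (n : ℝ)⁻¹ * (1 / z n - 4)) atTop (nhds 1) := by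
    apply hces.congr
    intro n
    rw [hsum n]
  -- add back 4/n → 0
  have h4n : Tendsto (fun n : ℕ => (n : ℝ)⁻¹ * 4) atTop (nhds 0) := by
    simpa using tendsto_inv_atTop_nhds_zero_nat.mul_const (4:ℝ)
  have hmain : Tendsto (fun n : ℕ => (n : ℝ)⁻¹ * (1 / z n)) atTop (nhds 1) := by
    have := hces'.add h4n
    simp only [add_zero] at this
    apply this.congr
    intro n
    ring
  have hfin := hmain.inv₀ one_ne_zero
  norm_num at hfin
  apply hfin.congr'
  filter_upwards [eventually_ge_atTop 1] with n hn
  have hn' : (0:ℝ) < (n : ℝ) := by exact_mod_cast hn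
  have h1 := (hb n).1
  ring
end

section
/- Let β_0 = 0 and β_{n+1} = (1 + β_n²)/2. Then the sequence α_n = 1 - β_n satisfies α_{n+1} = α_n - α_n²/2, Σ_n α_n = ∞, and Σ_n |α_{n+1} - α_n| < ∞. -/
/-- With β₀ = 0, β_{n+1} = (1 + β_n²)/2 and α_n = 1 - β_n, the sequence α
satisfies α_{n+1} = α_n - α_n²/2, Σ α_n = ∞ (i.e. α is not summable), and
Σ |α_{n+1} - α_n| < ∞. -/
theorem stmt4 (β α : ℕ → ℝ) (h0 : β 0 = 0)
    (hrec : ∀ n, β (n+1) = (1 + (β n)^2)/2)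
    (hα : ∀ n, α n = 1 - β n) :
    (∀ n, α (n+1) = α n - (α n)^2/2) ∧
    ¬ Summable α ∧
    Summable (fun n => |α (n+1) - α n|) := by
  have hA : ∀ n, α (n+1) = α n - (α n)^2/2 := by
    intro n; rw [hα, hα, hrec]; ring
  have h0' : α 0 = 1 := by rw [hα, h0]; ring
  have hpos : ∀ n, 0 < α n ∧ α n ≤ 1 := by
    intro n
    induction n with
    | zero => rw [h0']; norm_num
    | succ k ih =>
      obtain ⟨h1, h2⟩ := ih
      rw [hA]
      constructor
      · nlinarith
      · nlinarith
  -- lower bound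
  have hlb : ∀ n : ℕ, 1/((n:ℝ)+1) ≤ α n := by
    intro n
    induction n with
    | zero => rw [h0']; norm_num
    | succ k ih =>
      rw [hA]
      obtain ⟨h1, h2⟩ := hpos k
      have hk : (0:ℝ) < (k:ℝ) + 1 := by positivity
      have hk2 : (0:ℝ) < (k:ℝ) + 2 := by positivity
      have key : 1/((k:ℝ)+2) ≤ 1/((k:ℝ)+1) - (1/((k:ℝ)+1))^2/2 := by
        have heq : 1/((k:ℝ)+1) - (1/((k:ℝ)+1))^2/2 = (2*((k:ℝ)+1)-1)/(2*((k:ℝ)+1)^2) := by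
          field_simp
        rw [heq, div_le_div_iff₀ hk2 (by positivity)]
        nlinarith
      have hx1 : 1/((k:ℝ)+1) ≤ 1 := by
        rw [div_le_one hk]; linarith
      have hcast : (↑(k+1) : ℝ) + 1 = (k:ℝ) + 2 := by push_cast; ring
      rw [hcast]
      nlinarith [key, ih, mul_nonneg (sub_nonneg.mpr ih)
        (by nlinarith : (0:ℝ) ≤ 2 - α k - 1/((k:ℝ)+1))]
  refine ⟨hA, ?_, ?_⟩
  · intro hs
    have : Summable (fun n : ℕ => 1/((n:ℝ)+1)) := by
      apply Summable.of_nonneg_of_le (fun n => by positivity) hlb hs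
    have h3 : Summable (fun n : ℕ => 1/(((n+1 : ℕ)) : ℝ)) := by
      simpa using this
    exact Real.not_summable_one_div_natCast ((summable_nat_add_iff 1).mp h3)
  · apply summable_of_sum_range_le (c := 1) (fun n => abs_nonneg _)
    intro n
    have : ∀ i, |α (i+1) - α i| = α i - α (i+1) := by
      intro i
      rw [abs_sub_comm, abs_of_nonneg]
      have := (hpos i).1
      rw [hA]; nlinarith
    calc ∑ i ∈ Finset.range n, |α (i+1) - α i|
        = ∑ i ∈ Finset.range n, (α i - α (i+1)) := by
          exact Finset.sum_congr rfl (fun i _ => this i)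
      _ = α 0 - α n := Finset.sum_range_sub' α n
      _ ≤ 1 := by have := (hpos n).1; rw [h0']; linarith
end

section
/- For any general Mann iteration x^n = Σ_{i=0}^n π^n_i T x^{i-1} with weights π^n in the simplex, applied to the right-shift operator T on ℓ^∞(ℕ) started from x^0 = y^0 = (1,1,1,…), the fixed-point residual satisfies ‖x^n - Tx^n‖_∞ ≥ 1/(n+1). -/
/-- The right-shift operator on sequences: (x₀,x₁,…) ↦ (0,x₀,x₁,…). -/
def shiftSeq (x : ℕ → ℝ) : ℕ → ℝ := fun n => match n with
  | 0 => 0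
  | k+1 => x k

/-- For any general Mann iteration x^n = Σ_{i=0}^n π^n_i T x^{i-1}
(with T x^{-1} := y⁰) applied to the right shift T on ℓ^∞(ℕ), started from
x⁰ = y⁰ = (1,1,1,…), the residual satisfies ‖x^n - T x^n‖_∞ ≥ 1/(n+1). -/
theorem stmt8 (π : ℕ → ℕ → ℝ)
    (hπ_nonneg : ∀ n i, 0 ≤ π n i)
    (hπ_sum : ∀ n, ∑ i ∈ Finset.range (n+1), π n i = 1)
    (x : ℕ → ℕ → ℝ)
    (hx0 : ∀ j, x 0 j = 1)
    (hrec : ∀ n, 1 ≤ n → ∀ j, x n j =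
      ∑ i ∈ Finset.range (n+1), π n i * (if i = 0 then 1 else shiftSeq (x (i-1)) j)) :
    ∀ n : ℕ, 1/((n : ℝ) + 1) ≤ ⨆ j : ℕ, |x n j - shiftSeq (x n) j| := by
  -- all values are in [0,1]
  have hbound : ∀ n j, 0 ≤ x n j ∧ x n j ≤ 1 := by
    intro n
    induction n using Nat.strong_induction_on with
    | _ n IH =>
      intro j
      rcases Nat.eq_zero_or_pos n with h0 | hpos
      · subst h0; rw [hx0]; norm_num
      · rw [hrec n hpos j]
        have hterm : ∀ i ∈ Finset.range (n+1),
            0 ≤ π n i * (if i = 0 then 1 else shiftSeq (x (i-1)) j) ∧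
            π n i * (if i = 0 then 1 else shiftSeq (x (i-1)) j) ≤ π n i := by
          intro i hi
          have hc : 0 ≤ (if i = 0 then (1:ℝ) else shiftSeq (x (i-1)) j) ∧
              (if i = 0 then (1:ℝ) else shiftSeq (x (i-1)) j) ≤ 1 := by
            split
            · norm_num
            · rename_i hi0
              cases j with
              | zero => simp [shiftSeq]
              | succ k =>
                simp only [Finset.mem_range] at hi
                have : i - 1 < n := by omega
                exact ⟨(IH _ this k).1, (IH _ this k).2⟩
          constructor
          · exact mul_nonneg (hπ_nonneg n i) hc.1
          · nlinarith [hπ_nonneg n i, hc.2]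
        constructor
        · exact Finset.sum_nonneg fun i hi => (hterm i hi).1
        · calc ∑ i ∈ Finset.range (n+1), π n i * (if i = 0 then 1 else shiftSeq (x (i-1)) j)
              ≤ ∑ i ∈ Finset.range (n+1), π n i :=
                Finset.sum_le_sum fun i hi => (hterm i hi).2
            _ = 1 := hπ_sum n
  -- x n j = 1 for j ≥ n
  have hone : ∀ n, ∀ j, n ≤ j → x n j = 1 := by
    intro n
    induction n using Nat.strong_induction_on with
    | _ n IH =>
      intro j hj
      rcases Nat.eq_zero_or_pos n with h0 | hpos
      · subst h0; exact hx0 j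
      · rw [hrec n hpos j]
        have : ∀ i ∈ Finset.range (n+1),
            π n i * (if i = 0 then 1 else shiftSeq (x (i-1)) j) = π n i := by
          intro i hi
          split
          · ring
          · rename_i hi0
            obtain ⟨k, rfl⟩ : ∃ k, j = k + 1 := ⟨j - 1, by omega⟩
            have hik : i - 1 < n := by
              simp only [Finset.mem_range] at hi; omega
            have : x (i-1) k = 1 := IH _ hik k (by omega)
            simp [shiftSeq, this]
        rw [Finset.sum_congr rfl this, hπ_sum n]
  intro n
  -- telescoping sum
  have htel : ∑ j ∈ Finset.range (n+1), (x n j - shiftSeq (x n) j) = 1 := by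
    rw [Finset.sum_range_succ']
    have : ∀ i ∈ Finset.range n, x n (i+1) - shiftSeq (x n) (i+1)
        = x n (i+1) - x n i := by intro i _; simp [shiftSeq]
    rw [Finset.sum_congr rfl this, Finset.sum_range_sub (fun i => x n i)]
    simp [shiftSeq, hone n n le_rfl]
  -- some term is ≥ 1/(n+1)
  have hex : ∃ j ∈ Finset.range (n+1), 1/((n:ℝ)+1) ≤ x n j - shiftSeq (x n) j := by
    by_contra hcon
    push_neg at hcon
    have hlt : ∑ j ∈ Finset.range (n+1), (x n j - shiftSeq (x n) j)
        < ∑ j ∈ Finset.range (n+1), 1/((n:ℝ)+1) :=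
      Finset.sum_lt_sum_of_nonempty ⟨0, by simp⟩ hcon
    rw [htel, Finset.sum_const, Finset.card_range] at hlt
    have : ((n:ℝ)+1) ≠ 0 := by positivity
    simp only [nsmul_eq_mul, Nat.cast_add, Nat.cast_one] at hlt
    rw [mul_one_div_cancel this] at hlt; exact lt_irrefl _ hlt
  obtain ⟨j, _, hj⟩ := hex
  have hbdd : BddAbove (Set.range fun j => |x n j - shiftSeq (x n) j|) := by
    refine ⟨1, ?_⟩
    rintro _ ⟨k, rfl⟩
    have h1 := hbound n k
    have h2 : 0 ≤ shiftSeq (x n) k ∧ shiftSeq (x n) k ≤ 1 := by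
      cases k with
      | zero => simp [shiftSeq]
      | succ m => exact hbound n m
    rw [abs_le]; constructor <;> linarith [h1.1, h1.2, h2.1, h2.2]
  calc 1/((n:ℝ)+1) ≤ x n j - shiftSeq (x n) j := hj
    _ ≤ |x n j - shiftSeq (x n) j| := le_abs_self _
    _ ≤ ⨆ j : ℕ, |x n j - shiftSeq (x n) j| := le_ciSup hbdd j
end

section
/- For β_n = n/(n+2) the sequence defined by R_0 = 1 and R_n = (1-β_n)² + β_n R_{n-1} satisfies R_n ≤ 4/(n+1) for all n ≥ 0. -/
/-- For β_n = n/(n+2), the sequence R₀ = 1,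
R_n = (1-β_n)² + β_n R_{n-1} satisfies R_n ≤ 4/(n+1) for all n ≥ 0. -/
theorem stmt10 (R : ℕ → ℝ) (hR0 : R 0 = 1)
    (hRrec : ∀ n : ℕ, 1 ≤ n →
      R n = (1 - (n : ℝ)/((n : ℝ) + 2))^2 + ((n : ℝ)/((n : ℝ) + 2)) * R (n-1)) :
    ∀ n : ℕ, R n ≤ 4/((n : ℝ) + 1) := by
  intro n
  induction n with
  | zero => norm_num [hR0]
  | succ k ih =>
    have h := hRrec (k+1) (by omega)
    simp only [Nat.add_sub_cancel] at h
    rw [h]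
    push_cast
    have hk : (0:ℝ) < (k:ℝ) + 1 := by positivity
    have hk3 : (0:ℝ) < (k:ℝ) + 3 := by positivity
    have hβ : (0:ℝ) ≤ ((k:ℝ)+1)/((k:ℝ)+1+2) := by positivity
    have step : (1 - ((k:ℝ)+1)/((k:ℝ)+1+2))^2 + (((k:ℝ)+1)/((k:ℝ)+1+2)) * R k
        ≤ (1 - ((k:ℝ)+1)/((k:ℝ)+1+2))^2 + (((k:ℝ)+1)/((k:ℝ)+1+2)) * (4/((k:ℝ)+1)) := by
      gcongr
    refine step.trans ?_
    have h1 : ((k:ℝ)+1) ≠ 0 := by positivity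
    have h3 : ((k:ℝ)+1+2) ≠ 0 := by positivity
    have h2 : ((k:ℝ)+1+1) ≠ 0 := by positivity
    rw [le_div_iff₀ (by positivity)]
    field_simp
    nlinarith [sq_nonneg ((k:ℝ)+1), hk.le]
end

section
/- Let R_0 = 1 and R_n = (1-β_n)² + β_n R_{n-1} with β_n = n/(n+2). Then R_n = (4/(n+1))·(1 - H_{n+2}/(n+2)), where H_m = Σ_{k=1}^m 1/k is the m-th harmonic number. -/
/-!
Multiplying the recursion by `(n + 1) (n + 2)` makes it telescope: `T n := (n + 1) (n + 2) R n`
satisfies `T n = T (n - 1) + 4 - 4 / (n + 2)` with `T 0 = 2`, hence `T n = 4 (n + 2) - 4 H (n + 2)`.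
-/

lemma residualClosedForm_succ (n : ℕ) (S : ℝ) :
    4 / ((n : ℝ) + 1 + 1) * (1 - (S + 1 / ((n : ℝ) + 2 + 1)) / ((n : ℝ) + 1 + 2)) =
      (1 - ((n : ℝ) + 1) / ((n : ℝ) + 1 + 2)) ^ 2 +
        ((n : ℝ) + 1) / ((n : ℝ) + 1 + 2) * (4 / ((n : ℝ) + 1) * (1 - S / ((n : ℝ) + 2))) := by
  field_simp
  ring

/-- For β_n = n/(n+2), the sequence R₀ = 1,
R_n = (1-β_n)² + β_n R_{n-1} satisfies R_n = (4/(n+1))(1 - H_{n+2}/(n+2)),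
where H_m = Σ_{k=1}^m 1/k is the m-th harmonic number. -/
theorem stmt11 (R : ℕ → ℝ) (hR0 : R 0 = 1)
    (hRrec : ∀ n : ℕ, 1 ≤ n →
      R n = (1 - (n : ℝ)/((n : ℝ) + 2))^2 + ((n : ℝ)/((n : ℝ) + 2)) * R (n-1)) :
    ∀ n : ℕ, R n = (4/((n : ℝ) + 1)) *
      (1 - (∑ k ∈ Finset.range (n+2), 1/((k : ℝ) + 1))/((n : ℝ) + 2)) := by
  intro n
  induction n with
  | zero =>
    norm_num [hR0, Finset.sum_range_succ]
  | succ n ih =>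
    rw [hRrec (n + 1) (Nat.le_add_left 1 n), Nat.add_sub_cancel, ih, Finset.sum_range_succ _ (n + 2)]
    push_cast
    exact (residualClosedForm_succ n _).symm
end

section
/- Let H be a Hilbert space, T : H → H nonexpansive, M = I - T, μ = 1/2. Define sequences by y^{k+1} = (I - μM)x^k and x^{k+1} = y^{k+1} + (k/(k+2))(y^{k+1} - y^k) - (k/(k+2))(y^k - x^{k-1}), started from x^0 = y^0 = x^{-1}. Then x^n = (1/(n+1))x^0 + (n/(n+1))T x^{n-1} for all n ≥ 1; that is, Kim's inertial iteration coincides with Halpern's iteration with stepsize β_n = n/(n+1). -/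
/-!
The quantity `z k = (k + 1) x^k - k T x^{k-1}` is invariant along Kim's iteration: after
clearing the denominator `k + 2`, the inertial update reads
`(k + 2) x^{k+1} - (k + 1) T x^k = (k + 1) x^k - k T x^{k-1}`, because `2 y^{k+1} = x^k + T x^k`.
Since `z 0 = x^0`, solving `z n = x^0` for `x^n` is Halpern's iteration with `β_n = n/(n+1)`.
-/

namespace KimIteration

variable {E : Type*} [AddCommGroup E] [Module ℝ E]

def anchor (T : E → E) (x : ℕ → E) (k : ℕ) : E :=
  ((k : ℝ) + 1) • x k - (k : ℝ) • T (x (k - 1))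

theorem anchor_zero (T : E → E) (x : ℕ → E) : anchor T x 0 = x 0 := by
  simp [anchor]

theorem anchor_succ (T : E → E) (x y : ℕ → E)
    (hy : ∀ k : ℕ, y (k+1) = x k - (1/2 : ℝ) • (x k - T (x k)))
    (hx : ∀ k : ℕ, x (k+1) = y (k+1) + ((k : ℝ)/((k : ℝ) + 2)) • (y (k+1) - y k)
      - ((k : ℝ)/((k : ℝ) + 2)) • (y k - x (k-1)))
    (k : ℕ) : anchor T x (k + 1) = anchor T x k := by
  rcases k with _ | j
  · simp only [anchor, hx 0, hy 0]
    norm_num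
    module
  · simp only [anchor, hx (j + 1), hy (j + 1), hy j, Nat.add_sub_cancel]
    have : ((j : ℝ) + 1 + 2) ≠ 0 := by positivity
    push_cast
    match_scalars <;> field_simp <;> ring

theorem anchor_eq_init (T : E → E) (x y : ℕ → E)
    (hy : ∀ k : ℕ, y (k+1) = x k - (1/2 : ℝ) • (x k - T (x k)))
    (hx : ∀ k : ℕ, x (k+1) = y (k+1) + ((k : ℝ)/((k : ℝ) + 2)) • (y (k+1) - y k)
      - ((k : ℝ)/((k : ℝ) + 2)) • (y k - x (k-1)))
    (n : ℕ) : anchor T x n = x 0 := by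
  induction n with
  | zero => exact anchor_zero T x
  | succ k ih => rw [anchor_succ T x y hy hx, ih]

end KimIteration

open KimIteration

theorem stmt13_general {H : Type*} [NormedAddCommGroup H] [InnerProductSpace ℝ H]
    (T : H → H)
    (x y : ℕ → H)
    (hy : ∀ k : ℕ, y (k+1) = x k - (1/2 : ℝ) • (x k - T (x k)))
    (hx : ∀ k : ℕ, x (k+1) = y (k+1) + ((k : ℝ)/((k : ℝ) + 2)) • (y (k+1) - y k)
      - ((k : ℝ)/((k : ℝ) + 2)) • (y k - x (k-1))) :
    ∀ n : ℕ, 1 ≤ n →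
      x n = (1/((n : ℝ) + 1)) • x 0 + ((n : ℝ)/((n : ℝ) + 1)) • T (x (n-1)) := by
  intro n _
  have hz : ((n : ℝ) + 1) • x n - (n : ℝ) • T (x (n - 1)) = x 0 :=
    anchor_eq_init T x y hy hx n
  have hn : ((n : ℝ) + 1) ≠ 0 := by positivity
  rw [← hz]
  match_scalars
  · field_simp
  · field_simp; ring

/-- In a Hilbert space, Kim's inertial iteration for the ½-cocoercive
operator M = I - T with μ = 1/2, namely y^{k+1} = (I-μM)x^k and
x^{k+1} = y^{k+1} + (k/(k+2))(y^{k+1} - y^k) - (k/(k+2))(y^k - x^{k-1}), started from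
x⁰ = y⁰ = x^{-1}, coincides with Halpern's iteration
x^n = (1/(n+1))x⁰ + (n/(n+1))T x^{n-1}.  (Here `x (k-1)` with truncated subtraction
encodes the convention x^{-1} = x⁰.) -/
theorem stmt13 {H : Type*} [NormedAddCommGroup H] [InnerProductSpace ℝ H]
    [CompleteSpace H]
    (T : H → H) (hT : ∀ u v : H, ‖T u - T v‖ ≤ ‖u - v‖)
    (x y : ℕ → H) (hinit : y 0 = x 0)
    (hy : ∀ k : ℕ, y (k+1) = x k - (1/2 : ℝ) • (x k - T (x k)))
    (hx : ∀ k : ℕ, x (k+1) = y (k+1) + ((k : ℝ)/((k : ℝ) + 2)) • (y (k+1) - y k)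
      - ((k : ℝ)/((k : ℝ) + 2)) • (y k - x (k-1))) :
    ∀ n : ℕ, 1 ≤ n →
      x n = (1/((n : ℝ) + 1)) • x 0 + ((n : ℝ)/((n : ℝ) + 1)) • T (x (n-1)) :=
  stmt13_general T x y hy hx
end

section
/- Let X be a normed space, T : X → X a nonexpansive linear map with fixed point x*, and x^0 ∈ X. For stepsizes β_n ∈ [0,1] with β_0 = 0, the Halpern iterates satisfy ‖x^n - T x^n‖ ≤ ‖x^0 - x*‖ · Θ_n(β), where Θ_n(β) = 1 - β_n + Π_{l=1}^n β_l + Σ_{k=1}^n |(2-β_{k-1})β_k - 1| · Π_{l=k+1}^n β_l. -/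
/-!
The residuals `r n = x n - T (x n)` obey the linear recursion
`r (n+1) = (1 - β (n+1)) • r 0 + β (n+1) • T (r n)`, and `r 0 = y - T y` for `y = x 0 - xstar`.
Unrolling it writes `r n` as a combination of the vectors `T ^ j y`; after telescoping, the
coefficients are `1 - β n`, `-∏ β l` and `((2 - β (k-1)) * β k - 1) * ∏ β l`. Since every power
of `T` is nonexpansive, the triangle inequality gives the bound.
-/

open Finset

section Algebra

variable {R X : Type*} [CommRing R] [AddCommGroup X] [Module R X]

lemma halpern_residual_succ (T : X →ₗ[R] X) {β : ℕ → R} {x : ℕ → X}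
    (hrec : ∀ n : ℕ, 1 ≤ n → x n = (1 - β n) • x 0 + β n • T (x (n-1))) (n : ℕ) :
    x (n+1) - T (x (n+1)) = (1 - β (n+1)) • (x 0 - T (x 0)) + β (n+1) • T (x n - T (x n)) := by
  rw [hrec (n+1) n.succ_pos]
  simp only [Nat.add_sub_cancel, map_add, map_smul, map_sub]
  module

lemma halpern_residual_eq (T : X →ₗ[R] X) (y : X) {β : ℕ → R} (hβ0 : β 0 = 0) {r : ℕ → X}
    (h0 : r 0 = y - T y) (hsucc : ∀ n, r (n+1) = (1 - β (n+1)) • r 0 + β (n+1) • T (r n))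
    (n : ℕ) :
    r n = (1 - β n) • y
      + ∑ k ∈ Icc 1 n, (((2 - β (k-1)) * β k - 1) * ∏ l ∈ Icc (k+1) n, β l) • (T ^ (n+1-k)) y
      - (∏ l ∈ Icc 1 n, β l) • (T ^ (n+1)) y := by
  induction n with
  | zero => simp [h0, hβ0]
  | succ n ih =>
    have hshift : ∑ k ∈ Icc 1 n,
        (((2 - β (k-1)) * β k - 1) * ∏ l ∈ Icc (k+1) (n+1), β l) • (T ^ (n+1+1-k)) y =
        β (n+1) • T (∑ k ∈ Icc 1 n,
          (((2 - β (k-1)) * β k - 1) * ∏ l ∈ Icc (k+1) n, β l) • (T ^ (n+1-k)) y) := by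
      rw [map_sum, smul_sum]
      refine sum_congr rfl fun k hk => ?_
      have hkn := (mem_Icc.mp hk).2
      rw [prod_Icc_succ_top (by omega), show n+1+1-k = (n+1-k)+1 by omega, pow_succ',
        Module.End.mul_apply, map_smul, smul_smul]
      congr 1; ring
    rw [hsucc, h0, ih, sum_Icc_succ_top (Nat.le_add_left 1 n),
      prod_Icc_succ_top (Nat.le_add_left 1 n), hshift, Icc_eq_empty_of_lt (Nat.lt_succ_self _),
      prod_empty, Nat.add_sub_cancel, show n+1+1-(n+1) = 1 by omega, pow_one, pow_succ' T (n+1),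
      Module.End.mul_apply]
    simp only [map_add, map_sub, map_smul]
    module

end Algebra

section Norm

variable {X : Type*} [NormedAddCommGroup X] [NormedSpace ℝ X]

lemma norm_pow_apply_le_of_norm_apply_le {T : X →ₗ[ℝ] X} (hT : ∀ v, ‖T v‖ ≤ ‖v‖) (m : ℕ)
    (v : X) : ‖(T ^ m) v‖ ≤ ‖v‖ := by
  induction m with
  | zero => simp
  | succ m ih => rw [pow_succ', Module.End.mul_apply]; exact (hT _).trans ih

lemma norm_halpern_residual_le {T : X →ₗ[ℝ] X} (hT : ∀ v, ‖T v‖ ≤ ‖v‖) (y : X) {β : ℕ → ℝ}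
    (hβ : ∀ n, β n ∈ Set.Icc (0 : ℝ) 1) (n : ℕ) :
    ‖(1 - β n) • y
      + ∑ k ∈ Icc 1 n, (((2 - β (k-1)) * β k - 1) * ∏ l ∈ Icc (k+1) n, β l) • (T ^ (n+1-k)) y
      - (∏ l ∈ Icc 1 n, β l) • (T ^ (n+1)) y‖ ≤
    ‖y‖ * (1 - β n + ∏ l ∈ Icc 1 n, β l +
      ∑ k ∈ Icc 1 n, |(2 - β (k-1)) * β k - 1| * ∏ l ∈ Icc (k+1) n, β l) := by
  have hprod : ∀ a, 0 ≤ ∏ l ∈ Icc a n, β l := fun a => prod_nonneg fun l _ => (hβ l).1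
  have hsum : ‖∑ k ∈ Icc 1 n,
      (((2 - β (k-1)) * β k - 1) * ∏ l ∈ Icc (k+1) n, β l) • (T ^ (n+1-k)) y‖ ≤
      ∑ k ∈ Icc 1 n, (|(2 - β (k-1)) * β k - 1| * ∏ l ∈ Icc (k+1) n, β l) * ‖y‖ := by
    refine (norm_sum_le _ _).trans (sum_le_sum fun k _ => ?_)
    rw [norm_smul, Real.norm_eq_abs, abs_mul, abs_of_nonneg (hprod _)]
    exact mul_le_mul_of_nonneg_left (norm_pow_apply_le_of_norm_apply_le hT _ _)
      (mul_nonneg (abs_nonneg _) (hprod _))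
  calc _ ≤ ‖(1 - β n) • y‖ + ‖∑ k ∈ Icc 1 n,
          (((2 - β (k-1)) * β k - 1) * ∏ l ∈ Icc (k+1) n, β l) • (T ^ (n+1-k)) y‖
        + ‖(∏ l ∈ Icc 1 n, β l) • (T ^ (n+1)) y‖ :=
        (norm_sub_le _ _).trans (add_le_add_left (norm_add_le _ _) _)
    _ ≤ (1 - β n) * ‖y‖
        + ∑ k ∈ Icc 1 n, (|(2 - β (k-1)) * β k - 1| * ∏ l ∈ Icc (k+1) n, β l) * ‖y‖
        + (∏ l ∈ Icc 1 n, β l) * ‖y‖ := by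
      rw [norm_smul, norm_smul, Real.norm_eq_abs, Real.norm_eq_abs,
        abs_of_nonneg (sub_nonneg.mpr (hβ n).2), abs_of_nonneg (hprod 1)]
      gcongr
      · exact hprod 1
      · exact norm_pow_apply_le_of_norm_apply_le hT _ _
    _ = _ := by rw [← sum_mul]; ring

end Norm

/-- For a nonexpansive linear map T on a normed space with fixed point
x*, the Halpern iterates x^n = (1-β_n)x⁰ + β_n T x^{n-1} (β₀ = 0, β_n ∈ [0,1])
satisfy ‖x^n - T x^n‖ ≤ ‖x⁰ - x*‖ Θ_n(β), where
Θ_n(β) = 1 - β_n + Π_{l=1}^n β_l + Σ_{k=1}^n |(2-β_{k-1})β_k - 1| Π_{l=k+1}^n β_l. -/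
theorem stmt15 {X : Type*} [NormedAddCommGroup X] [NormedSpace ℝ X]
    (T : X →ₗ[ℝ] X) (hT : ∀ u v : X, ‖T u - T v‖ ≤ ‖u - v‖)
    (xstar : X) (hfix : T xstar = xstar)
    (β : ℕ → ℝ) (hβ0 : β 0 = 0) (hβ : ∀ n, β n ∈ Set.Icc (0 : ℝ) 1)
    (x : ℕ → X)
    (hrec : ∀ n : ℕ, 1 ≤ n → x n = (1 - β n) • x 0 + β n • T (x (n-1))) :
    ∀ n : ℕ, ‖x n - T (x n)‖ ≤ ‖x 0 - xstar‖ *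
      (1 - β n + ∏ l ∈ Finset.Icc 1 n, β l +
        ∑ k ∈ Finset.Icc 1 n, |(2 - β (k-1)) * β k - 1| * ∏ l ∈ Finset.Icc (k+1) n, β l) := by
  intro n
  have hT_norm : ∀ v, ‖T v‖ ≤ ‖v‖ := fun v => by simpa using hT v 0
  have hres0 : x 0 - T (x 0) = (x 0 - xstar) - T (x 0 - xstar) := by rw [map_sub, hfix]; abel
  rw [halpern_residual_eq T (x 0 - xstar) hβ0 (r := fun n => x n - T (x n)) hres0
    (halpern_residual_succ T hrec) n]
  exact norm_halpern_residual_le hT_norm _ hβ n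
end

section
/- For n ≥ 1, the function Θ_n(β) = 1 - β_n + Π_{l=1}^n β_l + Σ_{k=1}^n |(2-β_{k-1})β_k - 1|·Π_{l=k+1}^n β_l (with β_0 = 0) over β ∈ [0,1]^n attains its minimum value 2/(n+1) at β_k = k/(k+1) for k = 1,…,n. -/
/-!
With the tail products `y k = ∏_{l=k}^n β l` one has `y 0 = 0`, `y (n+1) = 1` and
`Θ_n(β) = 1 - y n + y 1 + ∑_{k=1}^n |y (k+1) - 2 y k + y (k-1)|`. In terms of the increments
`d k = y (k+1) - y k`, which sum to `1`, this is `d 0 + d n` plus the total variation of `d`.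
Some `d j` is at least `1/(n+1)`, and climbing from `d 0` up to `d j` and back down to `d n`
costs at least `2 d j - d 0 - d n` in variation, so `Θ_n(β) ≥ 2/(n+1)`. For `β k = k/(k+1)` the
tail products `y k = k/(n+1)` are linear, so every second difference vanishes and the bound is
attained.
-/

/-- The tight residual bound Θ_n(β) for Halpern's iteration applied to linear
nonexpansive maps:
Θ_n(β) = 1 - β_n + Π_{l=1}^n β_l + Σ_{k=1}^n |(2-β_{k-1})β_k - 1| Π_{l=k+1}^n β_l. -/
noncomputable def Theta (n : ℕ) (β : ℕ → ℝ) : ℝ :=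
  1 - β n + ∏ l ∈ Finset.Icc 1 n, β l +
    ∑ k ∈ Finset.Icc 1 n, |(2 - β (k-1)) * β k - 1| * ∏ l ∈ Finset.Icc (k+1) n, β l

open Finset

theorem two_div_le_add_add_sum_abs_sub (d : ℕ → ℝ) (n : ℕ)
    (hd : ∑ k ∈ range (n + 1), d k = 1) :
    2 / (n + 1) ≤ d 0 + d n + ∑ k ∈ range n, |d (k + 1) - d k| := by
  have hn : (0 : ℝ) < n + 1 := by positivity
  obtain ⟨j, hj, hdj⟩ : ∃ j ∈ range (n + 1), 1 / (n + 1) ≤ d j :=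
    exists_le_of_sum_le nonempty_range_add_one <| by
      rw [hd, sum_const, card_range, nsmul_eq_mul]; push_cast; exact (mul_one_div_cancel hn.ne').le
  have hjn : j ≤ n := Nat.lt_succ_iff.mp (mem_range.mp hj)
  have hvar : ∀ {a b}, a ≤ b → |d b - d a| ≤ ∑ k ∈ Ico a b, |d (k + 1) - d k| := fun h => by
    simpa only [Real.dist_eq, abs_sub_comm] using dist_le_Ico_sum_dist d h
  rw [range_eq_Ico, ← sum_Ico_consecutive _ (Nat.zero_le j) hjn]
  have htwo : 2 / ((n : ℝ) + 1) = 2 * (1 / (n + 1)) := by ring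
  linarith [hvar (Nat.zero_le j), hvar hjn, le_abs_self (d j - d 0), neg_abs_le (d n - d j)]

theorem two_div_le_of_second_differences (y : ℕ → ℝ) (n : ℕ) (h0 : y 0 = 0)
    (htop : y (n + 1) = 1) :
    2 / (n + 1) ≤ 1 - y n + y 1 + ∑ k ∈ range n, |y (k + 2) - 2 * y (k + 1) + y k| := by
  convert two_div_le_add_add_sum_abs_sub (fun k => y (k + 1) - y k) n
    (by rw [sum_range_sub, htop, h0, sub_zero]) using 1
  simp only [h0, htop, zero_add, sub_zero]
  congr 1
  · ring
  · exact sum_congr rfl fun k _ => by ring_nf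

theorem eq_prod_Icc_of_eq_mul {M : Type*} [CommMonoid M] {β y : ℕ → M} {n : ℕ}
    (htop : y (n + 1) = 1) (hstep : ∀ k ≤ n, y k = β k * y (k + 1)) {k : ℕ} (hk : k ≤ n + 1) :
    y k = ∏ l ∈ Icc k n, β l := by
  induction hk using Nat.decreasingInduction with
  | self => simp [htop]
  | of_succ k hk ih =>
    rw [hstep k (Nat.lt_succ_iff.mp hk), ih, Icc_add_one_left_eq_Ioc,
      mul_prod_Ioc_eq_prod_Icc (Nat.lt_succ_iff.mp hk)]

theorem sum_Icc_one_eq_sum_range {M : Type*} [AddCommMonoid M] (f : ℕ → M) (n : ℕ) :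
    ∑ k ∈ Icc 1 n, f k = ∑ k ∈ range n, f (k + 1) := by
  rw [← Ico_add_one_right_eq_Icc, sum_Ico_eq_sum_range]
  simp [add_comm]

theorem Theta_eq_of_tail_prod (n : ℕ) (β y : ℕ → ℝ) (htop : y (n + 1) = 1)
    (hstep : ∀ k ≤ n, y k = β k * y (k + 1)) (hnonneg : ∀ k, 0 ≤ y k) :
    Theta n β = 1 - y n + y 1 + ∑ k ∈ range n, |y (k + 2) - 2 * y (k + 1) + y k| := by
  have hprod : ∀ k ≤ n + 1, ∏ l ∈ Icc k n, β l = y k := fun k hk =>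
    (eq_prod_Icc_of_eq_mul htop hstep hk).symm
  rw [Theta, sum_Icc_one_eq_sum_range, hprod 1 (by omega), hstep n le_rfl, htop, mul_one]
  congr 1
  refine sum_congr rfl fun k hk => ?_
  have hk : k < n := mem_range.mp hk
  have hsecond : y (k + 2) - 2 * y (k + 1) + y k = -(((2 - β k) * β (k + 1) - 1) * y (k + 2)) := by
    rw [hstep k (by omega), hstep (k + 1) hk]
    ring
  rw [Nat.add_sub_cancel, hprod (k + 2) (by omega), hsecond, abs_neg, abs_mul,
    abs_of_nonneg (hnonneg _)]

theorem two_div_le_Theta (n : ℕ) (β : ℕ → ℝ) (hβ0 : β 0 = 0) (hβ : ∀ k, 0 ≤ β k) :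
    2 / (n + 1) ≤ Theta n β := by
  set y : ℕ → ℝ := fun k => ∏ l ∈ Icc k n, β l
  have htop : y (n + 1) = 1 := by simp [y]
  have hstep : ∀ k ≤ n, y k = β k * y (k + 1) := fun k hk => by
    simp only [y, Icc_add_one_left_eq_Ioc, mul_prod_Ioc_eq_prod_Icc hk]
  rw [Theta_eq_of_tail_prod n β y htop hstep fun k => prod_nonneg fun l _ => hβ l]
  exact two_div_le_of_second_differences y n (by rw [hstep 0 (Nat.zero_le n), hβ0, zero_mul]) htop

theorem Theta_natCast_div_add_one (n : ℕ) :
    Theta n (fun k => (k : ℝ) / (k + 1)) = 2 / (n + 1) := by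
  have hn : (n : ℝ) + 1 ≠ 0 := by positivity
  rw [Theta_eq_of_tail_prod n _ (fun k => k / (n + 1)) (by simp [hn])
    (fun k _ => by push_cast; field_simp) (fun k => by positivity),
    sum_eq_zero fun k _ => abs_eq_zero.mpr (by push_cast; ring)]
  field_simp
  ring

theorem stmt16_general (n : ℕ) :
    (∀ β : ℕ → ℝ, β 0 = 0 → (∀ k, β k ∈ Set.Icc (0 : ℝ) 1) →
      2/((n : ℝ) + 1) ≤ Theta n β) ∧
    Theta n (fun k => (k : ℝ)/((k : ℝ) + 1)) = 2/((n : ℝ) + 1) :=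
  ⟨fun β hβ0 hβ => two_div_le_Theta n β hβ0 fun k => (hβ k).1, Theta_natCast_div_add_one n⟩

/-- For n ≥ 1, the function Θ_n over β ∈ [0,1]^n (with β₀ = 0) attains
its minimum value 2/(n+1) at β_k = k/(k+1). -/
theorem stmt16 (n : ℕ) (hn : 1 ≤ n) :
    (∀ β : ℕ → ℝ, β 0 = 0 → (∀ k, β k ∈ Set.Icc (0 : ℝ) 1) →
      2/((n : ℝ) + 1) ≤ Theta n β) ∧
    Theta n (fun k => (k : ℝ)/((k : ℝ) + 1)) = 2/((n : ℝ) + 1) :=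
  stmt16_general n
end

section
/- Let T : ℓ¹(ℕ) → ℓ¹(ℕ) be the right shift and x^0 = e^0 = (1,0,0,…). With β_k = k/(k+1), the Halpern iterates x^n = (1/(n+1))x^0 + (n/(n+1))T x^{n-1} satisfy x^n = (1/(n+1)) Σ_{k=0}^n e^k, and hence ‖x^n - T x^n‖_1 = 2/(n+1). -/
/-- For the right shift T on ℓ¹(ℕ) started from x⁰ = e⁰ = (1,0,0,…),
the Halpern iterates x^n = (1/(n+1))x⁰ + (n/(n+1))T x^{n-1} (stepsizes β_k = k/(k+1))
satisfy x^n = (1/(n+1)) Σ_{k=0}^n e^k, and hence ‖x^n - T x^n‖₁ = 2/(n+1). -/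
theorem stmt17 (x : ℕ → ℕ → ℝ)
    (hx0 : ∀ j, x 0 j = if j = 0 then 1 else 0)
    (hrec : ∀ n : ℕ, 1 ≤ n → ∀ j, x n j =
      (1/((n : ℝ) + 1)) * x 0 j + ((n : ℝ)/((n : ℝ) + 1)) * shiftSeq (x (n-1)) j) :
    (∀ n j, x n j =
      (1/((n : ℝ) + 1)) * ∑ k ∈ Finset.range (n+1), (if j = k then (1 : ℝ) else 0)) ∧
    (∀ n, ∑' j : ℕ, |x n j - shiftSeq (x n) j| = 2/((n : ℝ) + 1)) := by
  have hxn : ∀ n j, x n j = if j ≤ n then 1/((n : ℝ)+1) else 0 := by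
    intro n
    induction n with
    | zero =>
      intro j
      rw [hx0 j]
      simp [Nat.le_zero]
    | succ n ih =>
      intro j
      have h := hrec (n+1) (by omega) j
      simp only [Nat.add_sub_cancel] at h
      rw [h, hx0 j]
      match j with
      | 0 =>
        simp [shiftSeq]
      | k+1 =>
        simp only [shiftSeq, ih k]
        have hn1 : ((n : ℝ) + 1) ≠ 0 := by positivity
        have hn2 : ((n : ℝ) + 1 + 1) ≠ 0 := by positivity
        by_cases hk : k ≤ n
        · simp only [hk, if_pos, Nat.succ_le_succ hk, if_true]
          push_cast
          field_simp
          ring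
        · have : ¬ (k + 1 ≤ n + 1) := by omega
          simp [hk, this]
  have key : ∀ n j, x n j =
      (1/((n : ℝ) + 1)) * ∑ k ∈ Finset.range (n+1), (if j = k then (1 : ℝ) else 0) := by
    intro n j
    rw [hxn n j, Finset.sum_ite_eq (Finset.range (n+1)) j (fun _ => (1:ℝ))]
    by_cases hj : j ≤ n
    · simp [hj, Finset.mem_range, Nat.lt_succ_of_le hj]
    · have : j ∉ Finset.range (n+1) := by simp; omega
      simp [hj, this]
  refine ⟨key, fun n => ?_⟩
  have hf : ∀ j, |x n j - shiftSeq (x n) j| =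
      if j = 0 then 1/((n:ℝ)+1) else if j = n+1 then 1/((n:ℝ)+1) else 0 := by
    intro j
    have hpos : (0:ℝ) < ((n:ℝ)+1) := by positivity
    match j with
    | 0 =>
      simp [shiftSeq, hxn n 0, abs_of_pos (by positivity : (0:ℝ) < 1/((n:ℝ)+1))]
      positivity
    | k+1 =>
      simp only [shiftSeq, hxn n (k+1), hxn n k]
      by_cases hk : k ≤ n
      · by_cases hk1 : k + 1 ≤ n
        · simp [hk, hk1, show ¬ (k+1 = 0) by omega, show ¬ (k+1 = n+1) by omega,
            show ¬ (k = n) by omega]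
        · have hkn : k = n := by omega
          simp [hk, hk1, hkn, abs_of_pos (by positivity : (0:ℝ) < 1/((n:ℝ)+1))]
          positivity
      · simp [hk, show ¬ (k+1 ≤ n) by omega, show ¬ (k+1 = 0) by omega,
          show ¬ (k+1 = n+1) by omega, show ¬ (k = n) by omega]
  calc ∑' j : ℕ, |x n j - shiftSeq (x n) j|
      = ∑ j ∈ ({0, n+1} : Finset ℕ), |x n j - shiftSeq (x n) j| := by
        apply tsum_eq_sum
        intro j hj
        simp only [Finset.mem_insert, Finset.mem_singleton, not_or] at hj
        rw [hf j]
        simp [hj.1, hj.2]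
    _ = 2/((n : ℝ) + 1) := by
        rw [Finset.sum_pair (by omega : (0:ℕ) ≠ n+1), hf 0, hf (n+1)]
        simp
        ring
end

section
/- Let T be the rotation of ℝ² by angle θ_n = π/(n+1) (Euclidean norm). Starting from x^0 = (1,0), the Halpern iterates with β_k = k/(k+1) satisfy x^n = (1/(n+1)) Σ_{k=0}^n (cos kθ_n, sin kθ_n), and ‖x^n - T x^n‖_2 = 2/(n+1). -/
open Real

/-- Let T be the rotation of ℝ² (Euclidean norm) by angle θ_n = π/(n+1).
Starting from x⁰ = (1,0), the Halpern iterates with β_k = k/(k+1), i.e.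
x^m = (1/(m+1))x⁰ + (m/(m+1))T x^{m-1}, satisfy
x^n = (1/(n+1)) Σ_{k=0}^n (cos kθ_n, sin kθ_n) and ‖x^n - T x^n‖₂ = 2/(n+1). -/
theorem stmt18 (n : ℕ)
    (T : EuclideanSpace ℝ (Fin 2) → EuclideanSpace ℝ (Fin 2))
    (hT : ∀ v : EuclideanSpace ℝ (Fin 2),
      T v 0 = Real.cos (π/((n : ℝ) + 1)) * v 0 - Real.sin (π/((n : ℝ) + 1)) * v 1 ∧
      T v 1 = Real.sin (π/((n : ℝ) + 1)) * v 0 + Real.cos (π/((n : ℝ) + 1)) * v 1)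
    (x : ℕ → EuclideanSpace ℝ (Fin 2))
    (hx0 : x 0 0 = 1 ∧ x 0 1 = 0)
    (hrec : ∀ m : ℕ, 1 ≤ m →
      x m = (1/((m : ℝ) + 1)) • x 0 + ((m : ℝ)/((m : ℝ) + 1)) • T (x (m-1))) :
    (x n 0 = (1/((n : ℝ) + 1)) *
        ∑ k ∈ Finset.range (n+1), Real.cos ((k : ℝ) * (π/((n : ℝ) + 1)))) ∧
    (x n 1 = (1/((n : ℝ) + 1)) *
        ∑ k ∈ Finset.range (n+1), Real.sin ((k : ℝ) * (π/((n : ℝ) + 1)))) ∧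
    ‖x n - T (x n)‖ = 2/((n : ℝ) + 1) := by
  set θ : ℝ := π/((n : ℝ) + 1) with hθ
  have hn1 : ((n : ℝ) + 1) ≠ 0 := by positivity
  have key : ∀ m : ℕ,
      x m 0 = (1/((m : ℝ) + 1)) * ∑ k ∈ Finset.range (m+1), Real.cos ((k : ℝ) * θ) ∧
      x m 1 = (1/((m : ℝ) + 1)) * ∑ k ∈ Finset.range (m+1), Real.sin ((k : ℝ) * θ) := by
    intro m
    induction m with
    | zero => simp [hx0.1, hx0.2]
    | succ m ih =>
      have hrec' := hrec (m+1) (by omega)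
      simp only [Nat.add_sub_cancel] at hrec'
      have hT0 := (hT (x m)).1
      have hT1 := (hT (x m)).2
      have hm1 : ((m : ℝ) + 1) ≠ 0 := by positivity
      have hm2 : ((m : ℝ) + 1 + 1) ≠ 0 := by positivity
      have e0 : x (m+1) 0 = (1/(((m:ℕ)+1 : ℝ) + 1)) * x 0 0 +
          ((((m:ℕ)+1 : ℝ))/(((m:ℕ)+1 : ℝ) + 1)) * (T (x m)) 0 := by
        rw [hrec']; simp [PiLp.add_apply, PiLp.smul_apply, smul_eq_mul]
      have e1 : x (m+1) 1 = (1/(((m:ℕ)+1 : ℝ) + 1)) * x 0 1 +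
          ((((m:ℕ)+1 : ℝ))/(((m:ℕ)+1 : ℝ) + 1)) * (T (x m)) 1 := by
        rw [hrec']; simp [PiLp.add_apply, PiLp.smul_apply, smul_eq_mul]
      have hc : ∀ k ∈ Finset.range (m+1),
          Real.cos θ * Real.cos ((k:ℝ)*θ) - Real.sin θ * Real.sin ((k:ℝ)*θ)
            = Real.cos (((k:ℝ)+1)*θ) := by
        intro k _
        rw [show ((k:ℝ)+1)*θ = (k:ℝ)*θ + θ by ring, Real.cos_add]; ring
      have hs : ∀ k ∈ Finset.range (m+1),
          Real.sin θ * Real.cos ((k:ℝ)*θ) + Real.cos θ * Real.sin ((k:ℝ)*θ)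
            = Real.sin (((k:ℝ)+1)*θ) := by
        intro k _
        rw [show ((k:ℝ)+1)*θ = (k:ℝ)*θ + θ by ring, Real.sin_add]; ring
      constructor
      · rw [e0, hT0, ih.1, ih.2, hx0.1]
        conv_rhs => rw [Finset.sum_range_succ']
        push_cast
        rw [show ∑ k ∈ Finset.range (m+1), Real.cos (((k:ℝ)+1)*θ)
            = ∑ k ∈ Finset.range (m+1),
              (Real.cos θ * Real.cos ((k:ℝ)*θ) - Real.sin θ * Real.sin ((k:ℝ)*θ)) from
          (Finset.sum_congr rfl hc).symm]
        rw [Finset.sum_sub_distrib, ← Finset.mul_sum, ← Finset.mul_sum]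
        field_simp
        simp only [mul_comm θ, zero_mul, Real.cos_zero]; ring
      · rw [e1, hT1, ih.1, ih.2, hx0.2]
        conv_rhs => rw [Finset.sum_range_succ']
        push_cast
        rw [show ∑ k ∈ Finset.range (m+1), Real.sin (((k:ℝ)+1)*θ)
            = ∑ k ∈ Finset.range (m+1),
              (Real.sin θ * Real.cos ((k:ℝ)*θ) + Real.cos θ * Real.sin ((k:ℝ)*θ)) from
          (Finset.sum_congr rfl hs).symm]
        rw [Finset.sum_add_distrib, ← Finset.mul_sum, ← Finset.mul_sum]
        field_simp
        simp only [mul_comm θ, zero_mul, Real.sin_zero]; ring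
  obtain ⟨k0, k1⟩ := key n
  refine ⟨k0, k1, ?_⟩
  have hπ : ((n : ℝ) + 1) * θ = π := by rw [hθ]; field_simp
  have hfc := Finset.sum_range_sub' (fun j : ℕ => Real.cos ((j : ℝ) * θ)) (n+1)
  have hfs := Finset.sum_range_sub' (fun j : ℕ => Real.sin ((j : ℝ) * θ)) (n+1)
  simp only [Nat.cast_zero, zero_mul, Real.cos_zero, Real.sin_zero, Nat.cast_add,
    Nat.cast_one, hπ, Real.cos_pi, Real.sin_pi] at hfc hfs
  have hsumc : ∑ k ∈ Finset.range (n+1),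
      (Real.cos ((k : ℝ) * θ) -
        (Real.cos θ * Real.cos ((k : ℝ) * θ) - Real.sin θ * Real.sin ((k : ℝ) * θ))) = 2 := by
    rw [show (2 : ℝ) = 1 - (-1) by norm_num, ← hfc]
    refine Finset.sum_congr rfl fun k _ => ?_
    rw [show ((k : ℝ) + 1) * θ = (k : ℝ) * θ + θ by ring, Real.cos_add]
    ring
  have hsums : ∑ k ∈ Finset.range (n+1),
      (Real.sin ((k : ℝ) * θ) -
        (Real.sin θ * Real.cos ((k : ℝ) * θ) + Real.cos θ * Real.sin ((k : ℝ) * θ))) = 0 := by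
    rw [show (0 : ℝ) = 0 - 0 by norm_num, ← hfs]
    refine Finset.sum_congr rfl fun k _ => ?_
    rw [show ((k : ℝ) + 1) * θ = (k : ℝ) * θ + θ by ring, Real.sin_add]
    ring
  have hd0 : x n 0 - T (x n) 0 = 2 / ((n : ℝ) + 1) := by
    rw [(hT (x n)).1, k0, k1]
    have : (1/((n:ℝ)+1)) * ∑ k ∈ Finset.range (n+1),
        (Real.cos ((k : ℝ) * θ) -
          (Real.cos θ * Real.cos ((k : ℝ) * θ) - Real.sin θ * Real.sin ((k : ℝ) * θ))) =
        (1/((n:ℝ)+1)) * 2 := by rw [hsumc]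
    rw [Finset.sum_sub_distrib, Finset.sum_sub_distrib, ← Finset.mul_sum, ← Finset.mul_sum] at this
    field_simp at this ⊢
    simp only [mul_comm θ] at this ⊢; linarith
  have hd1 : x n 1 - T (x n) 1 = 0 := by
    rw [(hT (x n)).2, k0, k1]
    have : (1/((n:ℝ)+1)) * ∑ k ∈ Finset.range (n+1),
        (Real.sin ((k : ℝ) * θ) -
          (Real.sin θ * Real.cos ((k : ℝ) * θ) + Real.cos θ * Real.sin ((k : ℝ) * θ))) =
        (1/((n:ℝ)+1)) * 0 := by rw [hsums]
    rw [Finset.sum_sub_distrib, Finset.sum_add_distrib, ← Finset.mul_sum, ← Finset.mul_sum] at this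
    field_simp at this ⊢
    simp only [mul_comm θ] at this ⊢; linarith
  rw [EuclideanSpace.norm_eq]
  simp only [Fin.sum_univ_two, PiLp.sub_apply, Real.norm_eq_abs, sq_abs, hd0, hd1]
  rw [show (2/((n:ℝ)+1))^2 + (0:ℝ)^2 = (2/((n:ℝ)+1))^2 by ring]
  exact Real.sqrt_sq (by positivity)
end

section
/- Let T be the right shift on ℓ¹(ℕ), and consider the Krasnosel'skiĭ–Mann iteration x^{n+1} = (1-α_{n+1})x^n + α_{n+1} T x^n started from x^0 = (1,0,0,…) with arbitrary α_i ∈ [0,1]. Then x^n = (p^n_0, p^n_1, …, p^n_n, 0, 0, …), where p^n_k = P(S_n = k) and S_n = X_1 + ⋯ + X_n is a sum of independent Bernoulli random variables with P(X_i = 1) = α_i. -/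
lemma icc_succ (n : ℕ) : Finset.Icc 1 (n+1) = insert (n+1) (Finset.Icc 1 n) := by
  ext m; simp [Finset.mem_Icc, Finset.mem_insert]; omega

lemma notmem (n : ℕ) : (n+1) ∉ Finset.Icc 1 n := by simp

/-- The Krasnosel'skiĭ–Mann iterates
x^{n+1} = (1-α_{n+1})x^n + α_{n+1} T x^n of the right shift T on ℓ¹(ℕ), started from
x⁰ = (1,0,0,…), satisfy x^n_k = P(S_n = k), where S_n = X_1 + ⋯ + X_n is a sum of
independent Bernoulli variables with P(X_i = 1) = α_i; i.e. x^n_k is the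
Poisson–binomial probability Σ_{S ⊆ {1,…,n}, |S| = k} Π_{i∈S} α_i Π_{i∉S} (1-α_i)
(which vanishes for k > n). -/
theorem stmt19 (α : ℕ → ℝ) (hα : ∀ i, α i ∈ Set.Icc (0 : ℝ) 1)
    (x : ℕ → ℕ → ℝ)
    (hx0 : ∀ j, x 0 j = if j = 0 then 1 else 0)
    (hrec : ∀ n j, x (n+1) j = (1 - α (n+1)) * x n j + α (n+1) * shiftSeq (x n) j) :
    ∀ n k, x n k = ∑ S ∈ Finset.powersetCard k (Finset.Icc 1 n),
      (∏ i ∈ S, α i) * ∏ i ∈ (Finset.Icc 1 n) \ S, (1 - α i) := by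
  intro n
  induction n with
  | zero =>
    intro k
    rw [hx0]
    cases k with
    | zero => simp
    | succ k =>
      rw [Finset.powersetCard_eq_empty.mpr (by simp)]
      simp
  | succ n ih =>
    intro k
    have hnm := notmem n
    rw [hrec, icc_succ n]
    cases k with
    | zero =>
      simp only [shiftSeq, ih 0, Finset.powersetCard_zero, Finset.sum_singleton,
        Finset.prod_empty, one_mul, Finset.sdiff_empty, mul_zero, add_zero,
        Finset.prod_insert hnm]
    | succ k =>
      rw [Finset.powersetCard_succ_insert hnm, Finset.sum_union, Finset.sum_image]
      · have h1 : ∀ S ∈ Finset.powersetCard (k+1) (Finset.Icc 1 n),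
            (∏ i ∈ S, α i) * ∏ i ∈ insert (n+1) (Finset.Icc 1 n) \ S, (1 - α i)
            = (1 - α (n+1)) * ((∏ i ∈ S, α i) * ∏ i ∈ Finset.Icc 1 n \ S, (1 - α i)) := by
          intro S hS
          rw [Finset.mem_powersetCard] at hS
          have hnS : (n+1) ∉ S := fun h => hnm (hS.1 h)
          rw [Finset.insert_sdiff_of_notMem _ hnS,
            Finset.prod_insert (by simp [hnm])]
          ring
        have h2 : ∀ S ∈ Finset.powersetCard k (Finset.Icc 1 n),
            (∏ i ∈ insert (n+1) S, α i) *
              ∏ i ∈ insert (n+1) (Finset.Icc 1 n) \ insert (n+1) S, (1 - α i)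
            = α (n+1) * ((∏ i ∈ S, α i) * ∏ i ∈ Finset.Icc 1 n \ S, (1 - α i)) := by
          intro S hS
          rw [Finset.mem_powersetCard] at hS
          have hnS : (n+1) ∉ S := fun h => hnm (hS.1 h)
          rw [Finset.prod_insert hnS, Finset.insert_sdiff_insert,
            Finset.sdiff_insert_of_notMem hnm]
          ring
        rw [Finset.sum_congr rfl h1, Finset.sum_congr rfl h2, ← Finset.mul_sum,
          ← Finset.mul_sum, ← ih (k+1), ← ih k]
        rfl
      · intro S hS T hT hIns
        rw [Finset.mem_coe, Finset.mem_powersetCard] at hS hT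
        have : ∀ U : Finset ℕ, U ⊆ Finset.Icc 1 n → (n+1) ∉ U :=
          fun U hU h => hnm (hU h)
        have := Finset.insert_erase_invOn.2.injOn (s := {S : Finset ℕ | (n+1) ∉ S})
        apply Finset.insert_erase_invOn (a := n+1) |>.2.injOn
          (by exact fun h => hnm (hS.1 h)) (by exact fun h => hnm (hT.1 h)) hIns
      · rw [Finset.disjoint_left]
        intro S hS hS'
        rw [Finset.mem_powersetCard] at hS
        simp only [Finset.mem_image] at hS'
        obtain ⟨T, _, rfl⟩ := hS'
        exact hnm (hS.1 (Finset.mem_insert_self _ _))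
end
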